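/- arXiv:1103.2806 — 4 statements merged into one kernel-verified Lean document; each statement's English description precedes it below -/
import Mathlib

section
/- Let p be an odd prime. Then the Bernoulli numbers B_{(p−1)p^(m−1)} converge p-adically to (p−1)/p as m → ∞. -/
/-!
Faulhaber's formula with `N = p ^ M` terms and exponent `n = φ(p ^ m)` reads
`B_n = (∑_{k < N} k ^ n) / N - ∑_{i < n} B_i (n+1 choose i) N ^ (n - i) / (n + 1)`.
By Euler's theorem `k ^ n ≡ [p ∤ k] (mod p ^ m)`, so the power sum is `≡ φ(N) (mod p ^ m)` and
the first term is `φ(N) / N = (p - 1) / p` up to an error of norm `p ^ (M - m)`. Since `p ∣ n`,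
`n + 1` is a `p`-adic unit, and by von Staudt–Clausen `|B_i|_p ≤ p`, so every term of the second
sum has norm at most `p ^ (1 - M)`. Taking `M = m / 2` both errors tend to zero.
-/

open Filter Topology Finset Nat

lemma bernoulli_eq_sum_range_pow_div_sub (n : ℕ) {N : ℕ} (hN : N ≠ 0) :
    bernoulli n = (∑ k ∈ range N, (k : ℚ) ^ n) / N
      - ∑ i ∈ range n, bernoulli i * (n + 1).choose i * (N : ℚ) ^ (n - i) / (n + 1) := by
  have hN' : (N : ℚ) ≠ 0 := Nat.cast_ne_zero.mpr hN
  have hterm : ∀ i ∈ range n, bernoulli i * (n + 1).choose i * (N : ℚ) ^ (n + 1 - i) / (n + 1) / N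
      = bernoulli i * (n + 1).choose i * (N : ℚ) ^ (n - i) / (n + 1) := by
    intro i hi
    rw [Nat.sub_add_comm (mem_range.mp hi).le, pow_succ]
    field_simp
  rw [sum_range_pow, sum_range_succ, add_div, sum_div, sum_congr rfl hterm,
    choose_succ_self_right, Nat.add_sub_cancel_left, pow_one]
  push_cast
  field_simp
  ring

namespace Nat

variable {p : ℕ}

lemma le_totient_prime_pow (hp : p.Prime) (m : ℕ) : m ≤ φ (p ^ m) := by
  rcases m.eq_zero_or_pos with rfl | hm
  · exact zero_le _
  calc m ≤ 2 ^ (m - 1) := by have := (m - 1).lt_two_pow_self; omega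
    _ ≤ p ^ (m - 1) := Nat.pow_le_pow_left hp.two_le _
    _ ≤ φ (p ^ m) := by
      rw [totient_prime_pow hp hm]
      exact Nat.le_mul_of_pos_right _ (by have := hp.two_le; omega)

lemma prime_dvd_totient_prime_pow (hp : p.Prime) {m : ℕ} (hm : 2 ≤ m) : p ∣ φ (p ^ m) := by
  rw [totient_prime_pow hp (by omega)]
  exact dvd_mul_of_dvd_left (dvd_pow_self p (by omega)) _

lemma pow_totient_prime_pow_modEq (hp : p.Prime) (m k : ℕ) :
    k ^ φ (p ^ m) ≡ if p.Coprime k then 1 else 0 [MOD p ^ m] := by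
  split_ifs with hk
  · exact ModEq.pow_totient (hk.pow_left m).symm
  · obtain ⟨j, rfl⟩ := hp.dvd_iff_not_coprime.mpr hk
    exact modEq_zero_iff_dvd.mpr <| (pow_dvd_pow p (le_totient_prime_pow hp m)).trans
      (pow_dvd_pow_of_dvd (dvd_mul_right p j) _)

lemma sum_range_pow_totient_modEq (hp : p.Prime) (m : ℕ) {M : ℕ} (hM : M ≠ 0) :
    ∑ k ∈ range (p ^ M), k ^ φ (p ^ m) ≡ φ (p ^ M) [MOD p ^ m] := by
  refine (ModEq.sum fun k _ => pow_totient_prime_pow_modEq hp m k).trans ?_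
  rw [sum_boole, totient_eq_card_coprime]
  simp_rw [coprime_pow_left_iff (pos_of_ne_zero hM)]
  rfl

lemma totient_prime_pow_div_self (hp : p.Prime) {M : ℕ} (hM : M ≠ 0) :
    (φ (p ^ M) : ℚ) / (p ^ M : ℕ) = (p - 1) / p := by
  obtain ⟨M, rfl⟩ := exists_eq_add_one_of_ne_zero hM
  have hp0 : (p : ℚ) ≠ 0 := mod_cast hp.ne_zero
  rw [totient_prime_pow_succ hp]
  push_cast [hp.one_le]
  field_simp
  ring

end Nat

namespace Padic

variable {p : ℕ} [hp : Fact p.Prime]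

lemma norm_natCast_prime_inv_le {q : ℕ} (hq : q.Prime) : ‖(q : ℚ_[p])⁻¹‖ ≤ p := by
  rw [norm_inv]
  by_cases hqp : q = p
  · rw [hqp, norm_p, inv_inv]
  · rw [norm_natCast_eq_one_iff.mpr ((coprime_primes hp.out hq).mpr (Ne.symm hqp)), inv_one]
    exact_mod_cast hp.out.one_le

lemma norm_bernoulli_le (n : ℕ) : ‖(bernoulli n : ℚ_[p])‖ ≤ p := by
  obtain ⟨k, rfl | rfl⟩ := n.even_or_odd'
  · obtain ⟨z, hz⟩ := Bernoulli.vonStaudt_clausen k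
    rw [eq_sub_of_add_eq hz.symm, Rat.cast_sub, Rat.cast_intCast, Rat.cast_sum, sub_eq_add_neg]
    refine (IsUltrametricDist.norm_add_le_max _ _).trans (max_le ?_ ?_)
    · exact (norm_int_le_one z).trans (mod_cast hp.out.one_le)
    · rw [norm_neg]
      refine IsUltrametricDist.norm_sum_le_of_forall_le_of_nonneg (by positivity) fun q hq => ?_
      rw [Rat.cast_div, Rat.cast_one, Rat.cast_natCast, one_div]
      exact norm_natCast_prime_inv_le (mem_filter.mp hq).2.1
  · rcases k.eq_zero_or_pos with rfl | hk
    · simpa [bernoulli_one, neg_div, one_div] using norm_natCast_prime_inv_le (p := p) prime_two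
    · rw [bernoulli_eq_zero_of_odd (odd_two_mul_add_one k) (by omega)]
      simp

lemma norm_natCast_add_one_of_dvd {n : ℕ} (h : p ∣ n) : ‖(n + 1 : ℚ_[p])‖ = 1 := by
  obtain ⟨c, rfl⟩ := h
  exact_mod_cast norm_natCast_eq_one_iff.mpr
    ((coprime_mul_left_add_right p 1 c).mpr (coprime_one_right p))

lemma norm_natCast_sub_le_of_modEq {a b m : ℕ} (h : a ≡ b [MOD p ^ m]) :
    ‖(a : ℚ_[p]) - b‖ ≤ ‖(p : ℚ_[p])‖ ^ m := by
  obtain ⟨c, hc⟩ := Nat.modEq_iff_dvd.mp h.symm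
  have hsub : (a : ℚ_[p]) - b = (p : ℚ_[p]) ^ m * c := by exact_mod_cast hc
  rw [hsub, norm_mul, norm_pow]
  exact mul_le_of_le_one_right (by positivity) (norm_int_le_one c)

lemma norm_sum_bernoulli_choose_pow_div_le {n : ℕ} (hn : p ∣ n) (M : ℕ) :
    ‖∑ i ∈ range n,
      (bernoulli i : ℚ_[p]) * (n + 1).choose i * ((p : ℚ_[p]) ^ M) ^ (n - i) / (n + 1)‖
        ≤ p * ‖(p : ℚ_[p])‖ ^ M := by
  refine IsUltrametricDist.norm_sum_le_of_forall_le_of_nonneg (by positivity) fun i hi => ?_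
  rw [norm_div, norm_natCast_add_one_of_dvd hn, div_one, norm_mul, norm_mul, norm_pow, norm_pow,
    ← mul_one (p : ℝ)]
  gcongr
  · exact norm_bernoulli_le i
  · exact IsUltrametricDist.norm_natCast_le_one _ _
  · exact pow_le_of_le_one (by positivity) (pow_le_one₀ (norm_nonneg _) norm_p_lt_one.le)
      (by have := mem_range.mp hi; omega)

lemma norm_bernoulli_totient_sub_le {m M : ℕ} (hM : M ≠ 0) (hMm : 2 * M ≤ m) :
    ‖(bernoulli (φ (p ^ m)) : ℚ_[p]) - ((p - 1) / p : ℚ)‖ ≤ p * ‖(p : ℚ_[p])‖ ^ M := by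
  set n := φ (p ^ m)
  have hρ0 : 0 < ‖(p : ℚ_[p])‖ := norm_pos_iff.mpr (mod_cast hp.out.ne_zero)
  have hsplit : bernoulli n - (p - 1) / p
      = ((∑ k ∈ range (p ^ M), k ^ n : ℕ) - φ (p ^ M) : ℚ) / (p ^ M : ℕ)
        - ∑ i ∈ range n,
            bernoulli i * (n + 1).choose i * ((p ^ M : ℕ) : ℚ) ^ (n - i) / (n + 1) := by
    rw [bernoulli_eq_sum_range_pow_div_sub n (pow_ne_zero _ hp.out.ne_zero),
      ← totient_prime_pow_div_self hp.out hM]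
    push_cast
    ring
  have hmain : ‖(∑ k ∈ range (p ^ M), (k : ℚ_[p]) ^ n - φ (p ^ M)) / (p : ℚ_[p]) ^ M‖
      ≤ p * ‖(p : ℚ_[p])‖ ^ M := by
    have hcong := norm_natCast_sub_le_of_modEq (sum_range_pow_totient_modEq hp.out m hM)
    push_cast at hcong
    rw [norm_div, norm_pow, div_le_iff₀ (by positivity)]
    calc _ ≤ ‖(p : ℚ_[p])‖ ^ m := hcong
      _ ≤ ‖(p : ℚ_[p])‖ ^ (M + M) := pow_le_pow_of_le_one hρ0.le norm_p_lt_one.le (by omega)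
      _ ≤ p * ‖(p : ℚ_[p])‖ ^ M * ‖(p : ℚ_[p])‖ ^ M := by
        rw [pow_add]
        gcongr
        exact le_mul_of_one_le_left (by positivity) (mod_cast hp.out.one_le)
  have herror := norm_sum_bernoulli_choose_pow_div_le
    (prime_dvd_totient_prime_pow hp.out (by omega : 2 ≤ m)) M
  rw [← Rat.cast_sub, hsplit, sub_eq_add_neg]
  push_cast
  exact (IsUltrametricDist.norm_add_le_max _ _).trans (max_le hmain (by rwa [norm_neg]))

end Padic

theorem padic_limit_bernoulli_general (p : ℕ) [Fact p.Prime] :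
    Tendsto (fun m : ℕ => ((bernoulli ((p - 1) * p ^ (m - 1)) : ℚ) : ℚ_[p]))
      atTop (𝓝 ((((p : ℚ) - 1) / p : ℚ) : ℚ_[p])) := by
  have hbound : ∀ᶠ m in atTop, ‖((bernoulli ((p - 1) * p ^ (m - 1)) : ℚ) : ℚ_[p])
      - ((((p : ℚ) - 1) / p : ℚ) : ℚ_[p])‖ ≤ p * ‖(p : ℚ_[p])‖ ^ (m / 2) := by
    filter_upwards [eventually_ge_atTop 2] with m hm
    rw [mul_comm, ← totient_prime_pow (Fact.out : p.Prime) (by omega)]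
    exact Padic.norm_bernoulli_totient_sub_le (by omega) (Nat.mul_div_le m 2)
  have hlim : Tendsto (fun m : ℕ => p * ‖(p : ℚ_[p])‖ ^ (m / 2)) atTop (𝓝 0) := by
    simpa using ((tendsto_pow_atTop_nhds_zero_of_lt_one (norm_nonneg _)
      (Padic.norm_p_lt_one (p := p))).comp (Nat.tendsto_div_const_atTop two_ne_zero)).const_mul
        (p : ℝ)
  exact tendsto_iff_norm_sub_tendsto_zero.mpr
    (squeeze_zero' (.of_forall fun _ => norm_nonneg _) hbound hlim)

theorem padic_limit_bernoulli (p : ℕ) [Fact p.Prime] (hodd : Odd p) :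
    Tendsto (fun m : ℕ => ((bernoulli ((p - 1) * p ^ (m - 1)) : ℚ) : ℚ_[p]))
      atTop (𝓝 ((((p : ℚ) - 1) / p : ℚ) : ℚ_[p])) :=
  padic_limit_bernoulli_general p
end

section
/- Let p be a prime and x ∈ ℤ_p with |x − 1|_p < 1. Then lim_{m→∞} (x^(p^m) − 1)/p^m = log_p(x), where log_p is the p-adic logarithm. -/
/-!
Write `x = 1 + y`. Since `C(N, k + 1) / N = C(N - 1, k) / (k + 1)`, the binomial theorem gives
`(x ^ N - 1) / N = ∑ₖ C(N - 1, k) yᵏ⁺¹ / (k + 1)`. For `N = pᵐ` we have `N - 1 → -1` in `ℤ_[p]`,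
so by continuity of the Mahler functions `C(·, k)` each coefficient tends to `C(-1, k) = (-1)ᵏ`,
which is the `k`-th coefficient of `log_p (1 + y)`. The coefficients are `p`-adic integers and
`‖1 / (k + 1)‖ ≤ k + 1`, so all terms are dominated by the summable `(k + 1) ‖y‖ᵏ⁺¹`, and Tannery's
theorem lets us pass to the limit termwise.
-/

open Filter Topology

/-- The p-adic logarithm, defined by the usual power series
`log_p(x) = ∑_{n ≥ 1} (-1)^(n+1) (x-1)^n / n` (the `n = 0` term vanishes since
division by zero is zero). -/
noncomputable def plog (p : ℕ) [Fact p.Prime] (x : ℚ_[p]) : ℚ_[p] :=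
  ∑' n : ℕ, (-1) ^ (n + 1) * (x - 1) ^ n / (n : ℚ_[p])

theorem Ring.choose_neg_one {R : Type*} [CommRing R] [BinomialRing R] (n : ℕ) :
    Ring.choose (-1 : R) n = (-1) ^ n := by
  rw [choose_neg, add_sub_cancel_left, choose_natCast, Nat.choose_self, Nat.cast_one,
    Units.smul_def, zsmul_eq_mul, mul_one, Int.cast_negOnePow_natCast]

namespace PadicInt

variable {p : ℕ} [Fact p.Prime]

theorem tendsto_natCast_pow_sub_one :
    Tendsto (fun m : ℕ => ((p ^ m - 1 : ℕ) : ℤ_[p])) atTop (𝓝 (-1)) := by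
  have hp : Tendsto (fun m : ℕ => (p : ℤ_[p]) ^ m) atTop (𝓝 0) :=
    tendsto_pow_atTop_nhds_zero_of_norm_lt_one (by simpa using Padic.norm_p_lt_one (p := p))
  simpa [Nat.cast_sub (Nat.one_le_pow _ _ (Fact.out : p.Prime).pos)] using hp.sub_const 1

theorem tendsto_choose_pow_sub_one (k : ℕ) :
    Tendsto (fun m : ℕ => ((p ^ m - 1).choose k : ℤ_[p])) atTop (𝓝 ((-1) ^ k)) := by
  have h := ((continuous_choose (p := p) k).tendsto _).comp tendsto_natCast_pow_sub_one
  rwa [Ring.choose_neg_one, Function.comp_def, funext fun m => Ring.choose_natCast _ k] at h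

end PadicInt

theorem Padic.norm_natCast_inv_le {p : ℕ} [Fact p.Prime] {n : ℕ} (hn : n ≠ 0) :
    ‖(n : ℚ_[p])‖⁻¹ ≤ n := by
  rw [← Rat.cast_natCast, Padic.eq_padicNorm, padicNorm.eq_zpow_of_nonzero (by exact_mod_cast hn),
    padicValRat.of_nat, Rat.cast_zpow, ← zpow_neg, neg_neg, zpow_natCast]
  exact_mod_cast Nat.le_of_dvd (Nat.pos_of_ne_zero hn) pow_padicValNat_dvd

theorem Nat.cast_choose_succ_div {K : Type*} [Field K] [CharZero K] (N k : ℕ) :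
    ((N + 1).choose (k + 1) : K) / (N + 1) = N.choose k / (k + 1) := by
  rw [div_eq_div_iff (Nat.cast_add_one_ne_zero N) (Nat.cast_add_one_ne_zero k),
    mul_comm (N.choose k : K)]
  exact_mod_cast (Nat.add_one_mul_choose_eq N k).symm

theorem one_add_pow_succ_sub_one_div {K : Type*} [Field K] [CharZero K] (y : K) (N : ℕ) :
    ((1 + y) ^ (N + 1) - 1) / (N + 1) =
      ∑ k ∈ Finset.range (N + 1), (N.choose k : K) * y ^ (k + 1) / (k + 1) := by
  rw [add_comm 1 y, add_pow, Finset.sum_range_succ', pow_zero, one_pow, Nat.choose_zero_right,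
    Nat.cast_one, one_mul, one_mul, add_sub_cancel_right, Finset.sum_div]
  refine Finset.sum_congr rfl fun k _ => ?_
  rw [one_pow, mul_one, mul_comm, mul_div_right_comm, Nat.cast_choose_succ_div,
    div_mul_eq_mul_div]

theorem pow_sub_one_div_eq_tsum {K : Type*} [Field K] [CharZero K] [TopologicalSpace K]
    (z : K) {N : ℕ} (hN : 0 < N) :
    (z ^ N - 1) / N = ∑' k, ((N - 1).choose k : K) * (z - 1) ^ (k + 1) / (k + 1) := by
  obtain ⟨N, rfl⟩ := Nat.exists_eq_add_of_lt hN
  rw [tsum_eq_sum (s := Finset.range (N + 1)) fun k hk => by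
      rw [Nat.choose_eq_zero_of_lt (by simpa using hk)]; simp]
  simpa using one_add_pow_succ_sub_one_div (z - 1) N

theorem plog_eq_tsum (p : ℕ) [Fact p.Prime] (x : ℚ_[p]) :
    plog p x = ∑' k : ℕ, (-1) ^ k * (x - 1) ^ (k + 1) / (k + 1) := by
  rw [plog, ← Nat.succ_injective.tsum_eq]
  · simp [pow_succ]
  · rintro (_ | k) h
    · simp at h
    · exact ⟨k, rfl⟩

theorem Padic.norm_choose_mul_pow_div_le {p : ℕ} [Fact p.Prime] (N k : ℕ) (y : ℚ_[p]) :
    ‖(N.choose k : ℚ_[p]) * y ^ (k + 1) / (k + 1)‖ ≤ (k + 1) * ‖y‖ ^ (k + 1) := by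
  have hk := Padic.norm_natCast_inv_le (p := p) k.succ_ne_zero
  push_cast at hk
  rw [norm_div, norm_mul, norm_pow, div_eq_mul_inv, mul_comm (k + 1 : ℝ)]
  have h_choose : ‖(N.choose k : ℚ_[p])‖ ≤ 1 := by
    simpa using Padic.norm_int_le_one (p := p) (N.choose k)
  gcongr
  exact mul_le_of_le_one_left (by positivity) h_choose

/-- Leopoldt's formula: `lim_{m→∞} (x^(p^m) - 1)/p^m = log_p x` for `|x - 1|_p < 1`. -/
theorem leopoldt_formula (p : ℕ) [Fact p.Prime] (x : ℤ_[p])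
    (hx : ‖(x : ℚ_[p]) - 1‖ < 1) :
    Tendsto (fun m : ℕ => ((x : ℚ_[p]) ^ (p ^ m) - 1) / (p : ℚ_[p]) ^ m)
      atTop (𝓝 (plog p (x : ℚ_[p]))) := by
  set y : ℚ_[p] := (x : ℚ_[p]) - 1
  have h_summable : Summable fun k : ℕ => ((k : ℝ) + 1) * ‖y‖ ^ (k + 1) := by
    simpa using (summable_nat_add_iff 1).mpr
      (summable_pow_mul_geometric_of_norm_lt_one (R := ℝ) 1 (by simpa using hx))
  have h_lim (k : ℕ) : Tendsto (fun m => ((p ^ m - 1).choose k : ℚ_[p]) * y ^ (k + 1) / (k + 1))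
      atTop (𝓝 ((-1) ^ k * y ^ (k + 1) / (k + 1))) := by
    have h_coeff : Tendsto (fun m => (((p ^ m - 1).choose k : ℤ_[p]) : ℚ_[p])) atTop
        (𝓝 (((-1) ^ k : ℤ_[p]) : ℚ_[p])) :=
      (continuous_subtype_val.tendsto _).comp (PadicInt.tendsto_choose_pow_sub_one k)
    push_cast at h_coeff
    exact (h_coeff.mul_const (y ^ (k + 1))).div_const ((k : ℚ_[p]) + 1)
  rw [plog_eq_tsum]
  convert tendsto_tsum_of_dominated_convergence h_summable h_lim
    (.of_forall fun m k => Padic.norm_choose_mul_pow_div_le _ k y) with m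
  exact_mod_cast pow_sub_one_div_eq_tsum (x : ℚ_[p]) (pow_pos (Fact.out : p.Prime).pos m)
end

section
/- Let p be an odd prime. Then lim_{m→∞} (2^((p−1)p^(m−1)) − 1)/p^m = (1/p) · log_p(2^(p−1)) in ℚ_p, where log_p denotes the p-adic logarithm. -/
/-!
Write `x = 1 + y` and `N = p ^ n`. Since `C(N, k + 1) / N = C(N - 1, k) / (k + 1)`, the quotient
`(x ^ N - 1) / N` is the finite sum `∑ₖ C(N - 1, k) y ^ (k + 1) / (k + 1)`, while
`log x = ∑ₖ (-1) ^ k y ^ (k + 1) / (k + 1)`. Multiplying `C(N - 1, k) - (-1) ^ k` by `k!` gives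
`(N - 1)⋯(N - k) - (-1)⋯(-k)`, which is divisible by `N`; and `|y| ≤ 1/p` gives
`|y| ^ (k + 1) ≤ p ^ -(k + 1) ≤ |(k + 1)!|`. Hence every term of the difference has norm at most
`p ^ -n`, and so has the difference by the ultrametric inequality. For `x = 2 ^ (p - 1)` Fermat's
little theorem gives `|x - 1| ≤ 1/p`, and the theorem is the case `n = m - 1`.
-/

open Filter Topology

open Finset Polynomial Nat

theorem descPochhammer_eval_neg_one (R : Type*) [CommRing R] (k : ℕ) :
    (descPochhammer R k).eval (-1) = (-1) ^ k * (k ! : R) := by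
  have h := ascPochhammer_eval_neg_eq_descPochhammer R (-1) k
  rw [neg_neg, ascPochhammer_eval_one] at h
  rw [h, ← mul_assoc, ← mul_pow, neg_one_mul, neg_neg, one_pow, one_mul]

theorem descFactorial_pred_modEq (N k : ℕ) (hN : 0 < N) :
    (N - 1).descFactorial k ≡ (-1) ^ k * k ! [ZMOD N] := by
  have h := sub_dvd_eval_sub (((N - 1 : ℕ) : ℤ)) (-1) (descPochhammer ℤ k)
  rw [descPochhammer_eval_eq_descFactorial, descPochhammer_eval_neg_one] at h
  rw [Nat.cast_sub hN, Nat.cast_one, sub_neg_eq_add, sub_add_cancel] at h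
  exact (Int.modEq_iff_dvd.2 h).symm

theorem sum_range_pow_succ_div_mul_choose {K : Type*} [Field K] [CharZero K] (M : ℕ) (y : K) :
    ∑ k ∈ range (M + 1), y ^ (k + 1) / (k + 1) * M.choose k =
      ((y + 1) ^ (M + 1) - 1) / (M + 1) := by
  have hM : (M + 1 : K) ≠ 0 := by exact_mod_cast M.succ_ne_zero
  have hterm : ∀ k, (M + 1 : K) * (y ^ (k + 1) / (k + 1) * M.choose k)
      = y ^ (k + 1) * (M + 1).choose (k + 1) := by
    intro k
    have hk : (k + 1 : K) ≠ 0 := by exact_mod_cast k.succ_ne_zero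
    have h : (M + 1 : K) * M.choose k = (M + 1).choose (k + 1) * (k + 1) := by
      exact_mod_cast add_one_mul_choose_eq M k
    field_simp
    linear_combination y ^ (k + 1) * h
  rw [eq_div_iff hM, mul_comm, Finset.mul_sum, Finset.sum_congr rfl fun k _ => hterm k, add_pow]
  simp [Finset.sum_range_succ' _ (M + 1)]

namespace Padic

variable {p : ℕ} [Fact p.Prime]

theorem norm_natCast_eq_zpow {n : ℕ} (hn : n ≠ 0) :
    ‖(n : ℚ_[p])‖ = (p : ℝ) ^ (-(padicValNat p n : ℤ)) := by
  rw [norm_eq_zpow_neg_valuation (Nat.cast_ne_zero.2 hn), valuation_natCast]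

theorem inv_norm_natCast_le {n : ℕ} (hn : n ≠ 0) : ‖(n : ℚ_[p])‖⁻¹ ≤ n := by
  rw [norm_natCast_eq_zpow hn, zpow_neg, inv_inv, zpow_natCast]
  exact_mod_cast Nat.le_of_dvd (Nat.pos_of_ne_zero hn) pow_padicValNat_dvd

theorem inv_pow_le_norm_factorial (k : ℕ) : (p : ℝ)⁻¹ ^ k ≤ ‖(k ! : ℚ_[p])‖ := by
  have hp : (1 : ℝ) ≤ p := by exact_mod_cast (Fact.out : p.Prime).one_lt.le
  rw [norm_natCast_eq_zpow (factorial_ne_zero k), inv_pow, ← zpow_natCast, ← zpow_neg]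
  exact zpow_le_zpow_right₀ hp (by simpa using padicValNat_factorial_le (p := p) k)

theorem norm_factorial_mul_norm_choose_sub_le (n k : ℕ) :
    ‖(k ! : ℚ_[p])‖ * ‖((p ^ n - 1).choose k : ℚ_[p]) - (-1) ^ k‖ ≤
      (p : ℝ) ^ (-n : ℤ) := by
  have hdvd := (descFactorial_pred_modEq (p ^ n) k (pow_pos (Fact.out : p.Prime).pos n)).symm.dvd
  rw [← norm_mul]
  convert (norm_int_le_pow_iff_dvd _ n).2 (by exact_mod_cast hdvd) using 2
  push_cast [descFactorial_eq_factorial_mul_choose]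
  ring

theorem norm_pow_succ_div_mul_choose_sub_le {y : ℚ_[p]} (hy : ‖y‖ ≤ (p : ℝ)⁻¹)
    (n k : ℕ) :
    ‖y ^ (k + 1) / (k + 1) * ((p ^ n - 1).choose k - (-1) ^ k)‖ ≤ (p : ℝ) ^ (-n : ℤ) := by
  have hk : 0 < ‖(k + 1 : ℚ_[p])‖ := norm_pos_iff.2 (by exact_mod_cast k.succ_ne_zero)
  have hfac : ‖((k + 1)! : ℚ_[p])‖ = ‖(k + 1 : ℚ_[p])‖ * ‖(k ! : ℚ_[p])‖ := by
    push_cast [factorial_succ]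
    exact norm_mul _ _
  calc ‖y ^ (k + 1) / (k + 1) * ((p ^ n - 1).choose k - (-1) ^ k)‖
      = ‖y‖ ^ (k + 1) / ‖(k + 1 : ℚ_[p])‖
          * ‖((p ^ n - 1).choose k : ℚ_[p]) - (-1) ^ k‖ := by
        rw [norm_mul, norm_div, norm_pow]
    _ ≤ ‖((k + 1)! : ℚ_[p])‖ / ‖(k + 1 : ℚ_[p])‖
          * ‖((p ^ n - 1).choose k : ℚ_[p]) - (-1) ^ k‖ := by
        gcongr
        exact (pow_le_pow_left₀ (norm_nonneg _) hy _).trans (inv_pow_le_norm_factorial _)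
    _ = ‖(k ! : ℚ_[p])‖ * ‖((p ^ n - 1).choose k : ℚ_[p]) - (-1) ^ k‖ := by
        rw [hfac, mul_div_cancel_left₀ _ hk.ne']
    _ ≤ (p : ℝ) ^ (-n : ℤ) := norm_factorial_mul_norm_choose_sub_le n k

theorem summable_plog {x : ℚ_[p]} (hx : ‖x - 1‖ < 1) :
    Summable fun n : ℕ => (-1) ^ (n + 1) * (x - 1) ^ n / (n : ℚ_[p]) := by
  refine .of_norm_bounded (summable_pow_mul_geometric_of_norm_lt_one (R := ℝ) 1
    (r := ‖x - 1‖) (by rwa [norm_norm])) fun n => ?_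
  rcases eq_or_ne n 0 with rfl | hn
  · simp
  rw [norm_div, norm_mul, norm_pow, norm_pow, norm_neg, norm_one, one_pow, one_mul, pow_one,
    div_eq_mul_inv, mul_comm]
  gcongr
  exact inv_norm_natCast_le hn

theorem hasSum_plog {x : ℚ_[p]} (hx : ‖x - 1‖ < 1) :
    HasSum (fun k : ℕ => (-1) ^ k * (x - 1) ^ (k + 1) / (k + 1)) (plog p x) := by
  have h := (hasSum_nat_add_iff' 1).2 (summable_plog hx).hasSum
  simp only [range_one, sum_singleton, CharP.cast_eq_zero, div_zero, sub_zero] at h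
  have hshift : (fun k : ℕ => (-1) ^ k * (x - 1) ^ (k + 1) / (k + 1))
      = fun k : ℕ => (-1) ^ (k + 1 + 1) * (x - 1) ^ (k + 1) / ((k + 1 : ℕ) : ℚ_[p]) := by
    ext k
    push_cast
    ring
  rw [hshift]
  exact h

theorem norm_pow_prime_pow_sub_one_div_sub_plog_le {x : ℚ_[p]}
    (hx : ‖x - 1‖ ≤ (p : ℝ)⁻¹) (n : ℕ) :
    ‖(x ^ p ^ n - 1) / (p : ℚ_[p]) ^ n - plog p x‖ ≤ (p : ℝ) ^ (-n : ℤ) := by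
  set M := p ^ n - 1
  have hM : M + 1 = p ^ n := Nat.sub_add_cancel (one_le_pow _ _ (Fact.out : p.Prime).pos)
  have hfin : HasSum (fun k : ℕ => (x - 1) ^ (k + 1) / (k + 1) * M.choose k)
      ((x ^ p ^ n - 1) / (p : ℚ_[p]) ^ n) := by
    have h : HasSum (fun k : ℕ => (x - 1) ^ (k + 1) / (k + 1) * (M.choose k : ℚ_[p]))
        (∑ k ∈ range (M + 1), (x - 1) ^ (k + 1) / (k + 1) * (M.choose k : ℚ_[p])) :=
      hasSum_sum_of_ne_finset_zero fun k hk => by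
        simp [choose_eq_zero_of_lt (not_lt.1 (mt mem_range.2 hk))]
    rwa [sum_range_pow_succ_div_mul_choose, sub_add_cancel, ← Nat.cast_add_one, hM,
      Nat.cast_pow] at h
  have hlog := hasSum_plog <|
    hx.trans_lt (inv_lt_one_of_one_lt₀ (mod_cast (Fact.out : p.Prime).one_lt))
  rw [← (hfin.sub hlog).tsum_eq]
  refine IsUltrametricDist.norm_tsum_le_of_forall_le_of_nonneg (by positivity) fun k => ?_
  refine le_trans (le_of_eq ?_) (norm_pow_succ_div_mul_choose_sub_le hx n k)
  congr 1
  ring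

theorem tendsto_pow_prime_pow_sub_one_div_plog {x : ℚ_[p]}
    (hx : ‖x - 1‖ ≤ (p : ℝ)⁻¹) :
    Tendsto (fun n : ℕ => (x ^ p ^ n - 1) / (p : ℚ_[p]) ^ n) atTop (𝓝 (plog p x)) := by
  rw [tendsto_iff_norm_sub_tendsto_zero]
  refine squeeze_zero (fun n => norm_nonneg _)
    (norm_pow_prime_pow_sub_one_div_sub_plog_le hx) ?_
  simp only [zpow_neg, zpow_natCast, ← inv_pow]
  exact tendsto_pow_atTop_nhds_zero_of_lt_one (by positivity)
    (inv_lt_one_of_one_lt₀ (mod_cast (Fact.out : p.Prime).one_lt))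

theorem norm_intCast_pow_sub_one_sub_one_le {a : ℤ} (ha : IsCoprime a p) :
    ‖(a : ℚ_[p]) ^ (p - 1) - 1‖ ≤ (p : ℝ)⁻¹ := by
  have hdvd := (Int.ModEq.pow_card_sub_one_eq_one Fact.out ha).symm.dvd
  simpa using (norm_int_le_pow_iff_dvd (a ^ (p - 1) - 1) 1).2 (by simpa using hdvd)

end Padic

theorem padic_limit_two_pow (p : ℕ) [Fact p.Prime] (hodd : Odd p) :
    Tendsto
      (fun m : ℕ => ((2 : ℚ_[p]) ^ ((p - 1) * p ^ (m - 1)) - 1) / (p : ℚ_[p]) ^ m)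
      atTop (𝓝 ((1 / (p : ℚ_[p])) * plog p ((2 : ℚ_[p]) ^ (p - 1)))) := by
  have h2 : ‖(2 : ℚ_[p]) ^ (p - 1) - 1‖ ≤ (p : ℝ)⁻¹ := by
    simpa using Padic.norm_intCast_pow_sub_one_sub_one_le (p := p) (a := 2)
      (Nat.isCoprime_iff_coprime.2 (Nat.coprime_two_left.2 hodd))
  have hlim := ((Padic.tendsto_pow_prime_pow_sub_one_div_plog h2).const_mul
    (1 / (p : ℚ_[p]))).comp (tendsto_sub_atTop_nat 1)
  refine hlim.congr' ?_
  filter_upwards [eventually_ge_atTop 1] with m hm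
  obtain ⟨m, rfl⟩ := Nat.exists_eq_add_of_le' hm
  simp only [Function.comp_apply, add_tsub_cancel_right, pow_mul, pow_succ]
  field_simp
end

section
/- Let p be an odd prime and k ≥ 4 even. For every positive integer ℓ, the quantity Σ_{0<d|ℓ, gcd(p,d)=1} d^(k−1) · [σ*_{k−3}(2ℓ²_0/d²) − 2^(k−2) σ*_{k−3}(ℓ²_0/(2d²))] (with σ*_j(x) = Σ_{0<e|x, gcd(p,e)=1} e^j if x ∈ ℕ and 0 otherwise) arises as the p-adic limit of Σ_{0<d|ℓ} d^(k_m−1) [σ_{k_m−3}(2ℓ²_0/d²) − 2^(k_m−2)σ_{k_m−3}(ℓ²_0/(2d²))] along k_m = k + (p−1)p^(m−1), where ℓ²_0 is any fixed positive integer. In particular, for any positive integers ε and D, lim_{m→∞} Σ_{0<d|ε} d^(k_m−1)[σ_{k_m−3}(D/d²) − 2^(k_m−2)σ_{k_m−3}(D/(4d²))] = Σ_{0<d|ε, gcd(p,d)=1} d^(k−1)[σ*_{k−3}(D/d²) − 2^(k−2)σ*_{k−3}(D/(4d²))] in ℤ_p. -/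
open Filter Topology Finset

/-- `σ_j(D/q)` interpreted as `0` when `D/q` is not a positive integer (i.e. when
`q ∤ D`), and as the sum of `j`-th powers of the positive divisors of `D/q` otherwise. -/
noncomputable def sigmaDiv (p : ℕ) [Fact p.Prime] (j D q : ℕ) : ℤ_[p] :=
  if q ∣ D then ∑ e ∈ (D / q).divisors, (e : ℤ_[p]) ^ j else 0

/-- `σ*_j(D/q)`: as `sigmaDiv`, but summing only over divisors coprime to `p`. -/
noncomputable def sigmaDivStar (p : ℕ) [Fact p.Prime] (j D q : ℕ) : ℤ_[p] :=
  if q ∣ D then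
    ∑ e ∈ (D / q).divisors.filter (fun e => Nat.gcd p e = 1), (e : ℤ_[p]) ^ j
  else 0

/-! Along `k_m = k + (p-1)p^(m-1)` the power `x ^ k_m` of a `p`-adic unit converges to `x ^ k`,
because `x ^ (p-1) ≡ 1 (mod p)` and hence `x ^ ((p-1)p^(m-1)) ≡ 1 (mod p^m)`, while the power of
a non-unit tends to `0`. Applying this termwise to the finite sums defining the coefficient,
divisors divisible by `p` drop out in the limit, which turns every `σ` into `σ*`; the factor
`2 ^ (k_m - 2)` survives because `p` is odd. -/

lemma tendsto_add_mul_pow_sub_atTop {p : ℕ} (hp : 1 < p) (k c : ℕ) :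
    Tendsto (fun m : ℕ => k + (p - 1) * p ^ (m - 1) - c) atTop atTop := by
  have hpow : Tendsto (fun m : ℕ => p ^ (m - 1)) atTop atTop :=
    (tendsto_pow_atTop_atTop_of_one_lt hp).comp (tendsto_sub_atTop_nat 1)
  refine tendsto_atTop_mono (fun m => ?_) ((tendsto_sub_atTop_nat c).comp hpow)
  have : p ^ (m - 1) ≤ (p - 1) * p ^ (m - 1) := Nat.le_mul_of_pos_left _ (by omega)
  exact Nat.sub_le_sub_right (show p ^ (m - 1) ≤ _ by omega) c

namespace PadicInt

variable {p : ℕ} [Fact p.Prime]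

lemma tendsto_pow_prime_pow_of_dvd_sub_one {y : ℤ_[p]} (hy : (p : ℤ_[p]) ∣ y - 1) :
    Tendsto (fun j : ℕ => y ^ p ^ j) atTop (𝓝 1) := by
  rw [tendsto_iff_norm_sub_tendsto_zero]
  have hbound (j : ℕ) : ‖y ^ p ^ j - 1‖ ≤ ((p : ℝ)⁻¹) ^ (j + 1) := by
    have hdvd : (p : ℤ_[p]) ^ (j + 1) ∣ y ^ p ^ j - 1 := by
      simpa using dvd_sub_pow_of_dvd_sub hy j
    have := (norm_le_pow_iff_mem_span_pow _ (j + 1)).2 (Ideal.mem_span_singleton.2 hdvd)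
    rwa [zpow_neg, zpow_natCast, ← inv_pow] at this
  have hp : (1 : ℝ) < p := Nat.one_lt_cast.2 (Fact.out : p.Prime).one_lt
  have hgeom : Tendsto (fun j : ℕ => ((p : ℝ)⁻¹) ^ (j + 1)) atTop (𝓝 0) :=
    (tendsto_pow_atTop_nhds_zero_of_lt_one (by positivity) (inv_lt_one_of_one_lt₀ hp)).comp
      (tendsto_add_atTop_nat 1)
  exact squeeze_zero (fun _ => norm_nonneg _) hbound hgeom

lemma dvd_pow_sub_one_sub_one_of_isUnit {x : ℤ_[p]} (hx : IsUnit x) :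
    (p : ℤ_[p]) ∣ x ^ (p - 1) - 1 := by
  have hx0 : toZMod x ≠ 0 := (hx.map toZMod).ne_zero
  have hker : x ^ (p - 1) - 1 ∈ RingHom.ker (toZMod : ℤ_[p] →+* ZMod p) := by
    rw [RingHom.mem_ker, map_sub, map_pow, map_one, ZMod.pow_card_sub_one_eq_one hx0, sub_self]
  rwa [ker_toZMod, maximalIdeal_eq_span_p, Ideal.mem_span_singleton] at hker

lemma tendsto_pow_add_mul_pow_of_isUnit {x : ℤ_[p]} (hx : IsUnit x) (a : ℕ) :
    Tendsto (fun m : ℕ => x ^ (a + (p - 1) * p ^ (m - 1))) atTop (𝓝 (x ^ a)) := by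
  have hone : Tendsto (fun m : ℕ => (x ^ (p - 1)) ^ p ^ (m - 1)) atTop (𝓝 1) :=
    (tendsto_pow_prime_pow_of_dvd_sub_one (dvd_pow_sub_one_sub_one_of_isUnit hx)).comp
      (tendsto_sub_atTop_nat 1)
  simpa only [pow_add, pow_mul, mul_one] using (tendsto_const_nhds (x := x ^ a)).mul hone

lemma tendsto_pow_of_not_isUnit {x : ℤ_[p]} (hx : ¬IsUnit x) {e : ℕ → ℕ}
    (he : Tendsto e atTop atTop) : Tendsto (fun m => x ^ e m) atTop (𝓝 0) :=
  (tendsto_pow_atTop_nhds_zero_of_norm_lt_one (not_isUnit_iff.1 hx)).comp he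

lemma isUnit_natCast_iff {n : ℕ} : IsUnit (n : ℤ_[p]) ↔ Nat.gcd p n = 1 :=
  isUnit_iff.trans norm_natCast_eq_one_iff

lemma tendsto_natCast_pow_add_mul_pow_sub (n : ℕ) {k c : ℕ} (hc : c ≤ k) :
    Tendsto (fun m : ℕ => (n : ℤ_[p]) ^ (k + (p - 1) * p ^ (m - 1) - c)) atTop
      (𝓝 (if Nat.gcd p n = 1 then (n : ℤ_[p]) ^ (k - c) else 0)) := by
  split_ifs with hn
  · have hexp (m : ℕ) : k + (p - 1) * p ^ (m - 1) - c = (k - c) + (p - 1) * p ^ (m - 1) := by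
      omega
    simpa only [hexp] using tendsto_pow_add_mul_pow_of_isUnit (isUnit_natCast_iff.2 hn) (k - c)
  · exact tendsto_pow_of_not_isUnit (mt isUnit_natCast_iff.1 hn)
      (tendsto_add_mul_pow_sub_atTop (Fact.out : p.Prime).one_lt k c)

end PadicInt

lemma tendsto_sigmaDiv_sigmaDivStar {p : ℕ} [Fact p.Prime] {k j : ℕ} (hj : j ≤ k) (D q : ℕ) :
    Tendsto (fun m : ℕ => sigmaDiv p (k + (p - 1) * p ^ (m - 1) - j) D q) atTop
      (𝓝 (sigmaDivStar p (k - j) D q)) := by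
  unfold sigmaDiv sigmaDivStar
  split_ifs
  · rw [Finset.sum_filter]
    exact tendsto_finsetSum _ fun e _ => PadicInt.tendsto_natCast_pow_add_mul_pow_sub e hj
  · exact tendsto_const_nhds

theorem padic_limit_rank_two_coeff_general (p : ℕ) [Fact p.Prime] (hodd : Odd p)
    (k : ℕ) (hk4 : 4 ≤ k) (ε D : ℕ) :
    Tendsto
      (fun m : ℕ =>
        ∑ d ∈ ε.divisors,
          (d : ℤ_[p]) ^ (k + (p - 1) * p ^ (m - 1) - 1) *
            (sigmaDiv p (k + (p - 1) * p ^ (m - 1) - 3) D (d ^ 2) -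
              2 ^ (k + (p - 1) * p ^ (m - 1) - 2) *
                sigmaDiv p (k + (p - 1) * p ^ (m - 1) - 3) D (4 * d ^ 2)))
      atTop
      (𝓝 (∑ d ∈ ε.divisors.filter (fun d => Nat.gcd p d = 1),
          (d : ℤ_[p]) ^ (k - 1) *
            (sigmaDivStar p (k - 3) D (d ^ 2) -
              2 ^ (k - 2) * sigmaDivStar p (k - 3) D (4 * d ^ 2)))) := by
  have hp2 : Nat.gcd p 2 = 1 := Nat.coprime_two_right.2 hodd
  have htwo : Tendsto (fun m : ℕ => (2 : ℤ_[p]) ^ (k + (p - 1) * p ^ (m - 1) - 2)) atTop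
      (𝓝 (2 ^ (k - 2))) := by
    simpa only [hp2, if_true, Nat.cast_ofNat] using
      PadicInt.tendsto_natCast_pow_add_mul_pow_sub (p := p) 2 (k := k) (c := 2) (by omega)
  rw [Finset.sum_filter]
  refine tendsto_finsetSum _ fun d _ => ?_
  have hd := PadicInt.tendsto_natCast_pow_add_mul_pow_sub (p := p) d (k := k) (c := 1) (by omega)
  have hσ (q : ℕ) := tendsto_sigmaDiv_sigmaDivStar (p := p) (k := k) (j := 3) (by omega) D q
  simpa only [ite_mul, zero_mul] using hd.mul ((hσ _).sub (htwo.mul (hσ _)))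

/-- The rank-two Fourier coefficient convergence: for `k_m = k + (p-1)p^(m-1)`,
`∑_{0<d|ε} d^(k_m-1)[σ_{k_m-3}(D/d²) − 2^(k_m-2) σ_{k_m-3}(D/(4d²))]` converges
`p`-adically to
`∑_{0<d|ε, (p,d)=1} d^(k-1)[σ*_{k-3}(D/d²) − 2^(k-2) σ*_{k-3}(D/(4d²))]`. -/
theorem padic_limit_rank_two_coeff (p : ℕ) [Fact p.Prime] (hodd : Odd p)
    (k : ℕ) (hk : Even k) (hk4 : 4 ≤ k) (ε D : ℕ) (hε : 0 < ε) (hD : 0 < D) :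
    Tendsto
      (fun m : ℕ =>
        ∑ d ∈ ε.divisors,
          (d : ℤ_[p]) ^ (k + (p - 1) * p ^ (m - 1) - 1) *
            (sigmaDiv p (k + (p - 1) * p ^ (m - 1) - 3) D (d ^ 2) -
              2 ^ (k + (p - 1) * p ^ (m - 1) - 2) *
                sigmaDiv p (k + (p - 1) * p ^ (m - 1) - 3) D (4 * d ^ 2)))
      atTop
      (𝓝 (∑ d ∈ ε.divisors.filter (fun d => Nat.gcd p d = 1),
          (d : ℤ_[p]) ^ (k - 1) *
            (sigmaDivStar p (k - 3) D (d ^ 2) -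
              2 ^ (k - 2) * sigmaDivStar p (k - 3) D (4 * d ^ 2)))) :=
  padic_limit_rank_two_coeff_general p hodd k hk4 ε D
end
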